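/- Let S > 0, K > 0, T > 0 and r ∈ ℝ be constants. The function v ↦ S e^{rT} Φ(d₁(v)) − K Φ(d₂(v)), where d₁(v) = (ln(S/K) + (r + v²/2)T)/(v√T) and d₂(v) = d₁(v) − v√T, is monotonically increasing on (0, ∞); that is, the Black–Scholes value of the European call option is an increasing function of the volatility parameter v. -/

import Mathlib

/-!
Differentiate in `v`. With `d₂ = d₁ - v√T`, one has `d₁² - d₂² = 2 v√T d₁ - v²T = 2(ln(S/K) + rT)`,
so `S e^{rT} φ(d₁) = K φ(d₂)` for the Gaussian density `φ`. Hence the two terms containing `d₁'`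
cancel and the derivative (the vega) is `K √T φ(d₂) > 0`.
-/

open MeasureTheory

/-- The standard normal cumulative distribution function. -/
noncomputable def stdNormalCDF (x : ℝ) : ℝ :=
  (Real.sqrt (2 * Real.pi))⁻¹ * ∫ u in Set.Iio x, Real.exp (-u ^ 2 / 2)

open Real

lemma hasDerivAt_integral_Iio {E : Type*} [NormedAddCommGroup E] [NormedSpace ℝ E]
    [CompleteSpace E] {f : ℝ → E} (hf : Integrable f) (hf_cont : Continuous f) (x : ℝ) :
    HasDerivAt (fun y => ∫ u in Set.Iio y, f u) (f x) x := by
  have h_split : ∀ y, ∫ u in Set.Iio y, f u = (∫ u in Set.Iic 0, f u) + ∫ u in 0..y, f u := by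
    intro y
    rw [setIntegral_congr_set Iio_ae_eq_Iic,
      ← intervalIntegral.integral_Iic_sub_Iic hf.integrableOn hf.integrableOn, add_sub_cancel]
  simp only [h_split]
  exact (intervalIntegral.integral_hasDerivAt_right hf.intervalIntegrable
    (hf_cont.stronglyMeasurableAtFilter _ _) hf_cont.continuousAt).const_add _

lemma integrable_exp_neg_sq_div_two : Integrable fun u : ℝ => exp (-u ^ 2 / 2) := by
  convert integrable_exp_neg_mul_sq (by norm_num : (0 : ℝ) < 1 / 2) using 3 with u
  ring

lemma hasDerivAt_stdNormalCDF (x : ℝ) :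
    HasDerivAt stdNormalCDF ((√(2 * π))⁻¹ * exp (-x ^ 2 / 2)) x :=
  (hasDerivAt_integral_Iio integrable_exp_neg_sq_div_two (by fun_prop) x).const_mul _

noncomputable def blackScholesD1 (S K T r v : ℝ) : ℝ :=
  (log (S / K) + (r + v ^ 2 / 2) * T) / (v * √T)

noncomputable def blackScholesCall (S K T r v : ℝ) : ℝ :=
  S * exp (r * T) * stdNormalCDF (blackScholesD1 S K T r v)
    - K * stdNormalCDF (blackScholesD1 S K T r v - v * √T)

lemma differentiableAt_blackScholesD1 {S K T : ℝ} (r : ℝ) (hT : 0 < T) {v : ℝ} (hv : v ≠ 0) :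
    DifferentiableAt ℝ (blackScholesD1 S K T r) v := by
  have : v * √T ≠ 0 := mul_ne_zero hv (sqrt_pos.mpr hT).ne'
  unfold blackScholesD1
  fun_prop (disch := assumption)

lemma mul_exp_neg_sq_blackScholesD1 {S K T : ℝ} (r : ℝ) (hS : 0 < S) (hK : 0 < K) (hT : 0 < T)
    {v : ℝ} (hv : v ≠ 0) :
    S * exp (r * T) * exp (-blackScholesD1 S K T r v ^ 2 / 2)
      = K * exp (-(blackScholesD1 S K T r v - v * √T) ^ 2 / 2) := by
  set d := blackScholesD1 S K T r v
  have hT_sqrt : √T ^ 2 = T := sq_sqrt hT.le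
  have hd : d * (v * √T) = log S - log K + (r + v ^ 2 / 2) * T := by
    rw [← log_div hS.ne' hK.ne']
    exact div_mul_cancel₀ _ (mul_ne_zero hv (sqrt_pos.mpr hT).ne')
  have h_exponent : -(d - v * √T) ^ 2 / 2 = -d ^ 2 / 2 + (log S - log K + r * T) := by
    linear_combination hd - v ^ 2 / 2 * hT_sqrt
  rw [h_exponent, exp_add, exp_add, exp_sub, exp_log hS, exp_log hK]
  field_simp

lemma hasDerivAt_blackScholesCall {S K T : ℝ} (r : ℝ) (hS : 0 < S) (hK : 0 < K) (hT : 0 < T)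
    {v : ℝ} (hv : v ≠ 0) :
    HasDerivAt (blackScholesCall S K T r)
      (K * √T * ((√(2 * π))⁻¹ * exp (-(blackScholesD1 S K T r v - v * √T) ^ 2 / 2))) v := by
  set d := blackScholesD1 S K T r v
  obtain ⟨d', hd'⟩ : ∃ d', HasDerivAt (blackScholesD1 S K T r) d' v :=
    ⟨_, (differentiableAt_blackScholesD1 r hT hv).hasDerivAt⟩
  have hd₂' : HasDerivAt (fun w => blackScholesD1 S K T r w - w * √T) (d' - √T) v :=
    hd'.sub (hasDerivAt_mul_const √T)
  have h_call := (((hasDerivAt_stdNormalCDF d).comp v hd').const_mul (S * exp (r * T))).sub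
    (((hasDerivAt_stdNormalCDF (d - v * √T)).comp v hd₂').const_mul K)
  have h_density := mul_exp_neg_sq_blackScholesD1 r hS hK hT hv
  refine h_call.congr_deriv ?_
  linear_combination d' * (√(2 * π))⁻¹ * h_density

/-- The Black–Scholes value of the European call option,
`v ↦ S e^{rT} Φ(d₁(v)) − K Φ(d₂(v))` with
`d₁(v) = (ln(S/K) + (r + v²/2)T)/(v√T)` and `d₂(v) = d₁(v) − v√T`,
is an increasing function of the volatility parameter `v` on `(0, ∞)`. -/
theorem blackScholes_strictMonoOn_vol
    (S K T r : ℝ) (hS : 0 < S) (hK : 0 < K) (hT : 0 < T) :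
    StrictMonoOn
      (fun v : ℝ =>
        S * Real.exp (r * T)
            * stdNormalCDF ((Real.log (S / K) + (r + v ^ 2 / 2) * T) / (v * Real.sqrt T))
          - K * stdNormalCDF
              ((Real.log (S / K) + (r + v ^ 2 / 2) * T) / (v * Real.sqrt T)
                - v * Real.sqrt T))
      (Set.Ioi 0) := by
  change StrictMonoOn (blackScholesCall S K T r) (Set.Ioi 0)
  have h_vega (v : ℝ) (hv : v ∈ Set.Ioi 0) := hasDerivAt_blackScholesCall r hS hK hT (ne_of_gt hv)
  refine strictMonoOn_of_deriv_pos (convex_Ioi 0)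
    (fun v hv => (h_vega v hv).continuousAt.continuousWithinAt) fun v hv => ?_
  rw [interior_Ioi] at hv
  rw [(h_vega v hv).deriv]
  positivity
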